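/- arXiv:2211.11373 — 10 statements merged into one kernel-verified Lean document; each statement's English description precedes it below -/
import Mathlib

section
/- Let α > 0 and let f : [0,∞) → ℝ be continuous and strictly decreasing with f(α) = α. For x ∈ (0, π/2) let h(x) be the unique λ ∈ (0,α) with f(λ) = λ·(1 + tan(x)²). Then h is strictly decreasing on (0, π/2), h(x) → α as x → 0⁺, and h(x) → 0 as x → (π/2)⁻. -/
open Real Filter Set

lemma antiOn_of_strictAntiOn {f : ℝ → ℝ} (hfa : StrictAntiOn f (Set.Ici 0))
    {u v : ℝ} (hu : 0 ≤ u) (hv : 0 ≤ v) (huv : u ≤ v) : f v ≤ f u := by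
  rcases eq_or_lt_of_le huv with rfl | h
  · exact le_refl _
  · exact (hfa hu hv h).le

/-- the function h(x) defined implicitly by f(h) = h(1+tan²x),
h(x) ∈ (0,α), is strictly decreasing on (0,π/2), tends to α at 0⁺ and to 0 at (π/2)⁻. -/
theorem stmt4 (α : ℝ) (hα : 0 < α) (f h : ℝ → ℝ)
    (hfc : ContinuousOn f (Set.Ici 0))
    (hfa : StrictAntiOn f (Set.Ici 0))
    (hfα : f α = α)
    (hh : ∀ x ∈ Set.Ioo 0 (Real.pi / 2),
      h x ∈ Set.Ioo 0 α ∧ f (h x) = h x * (1 + Real.tan x ^ 2)) :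
    StrictAntiOn h (Set.Ioo 0 (Real.pi / 2)) ∧
    Filter.Tendsto h (nhdsWithin 0 (Set.Ioi 0)) (nhds α) ∧
    Filter.Tendsto h (nhdsWithin (Real.pi / 2) (Set.Iio (Real.pi / 2))) (nhds 0) := by
  have hpi : 0 < Real.pi / 2 := by positivity
  have hmem0 : ∀ᶠ x in nhdsWithin 0 (Set.Ioi 0), x ∈ Set.Ioo 0 (Real.pi / 2) :=
    Ioo_mem_nhdsGT hpi
  have hmemπ : ∀ᶠ x in nhdsWithin (Real.pi / 2) (Set.Iio (Real.pi / 2)),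
      x ∈ Set.Ioo 0 (Real.pi / 2) := Ioo_mem_nhdsLT hpi
  refine ⟨?_, ?_, ?_⟩
  · -- strict anti
    intro x hx y hy hxy
    obtain ⟨hhx, hfx⟩ := hh x hx
    obtain ⟨hhy, hfy⟩ := hh y hy
    by_contra hcon
    push_neg at hcon
    have h1 : f (h y) ≤ f (h x) := antiOn_of_strictAntiOn hfa hhx.1.le hhy.1.le hcon
    have htan : Real.tan x < Real.tan y :=
      Real.tan_lt_tan_of_nonneg_of_lt_pi_div_two hx.1.le hy.2 hxy
    have htx : 0 < Real.tan x := Real.tan_pos_of_pos_of_lt_pi_div_two hx.1 hx.2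
    have hsq : Real.tan x ^ 2 < Real.tan y ^ 2 := by nlinarith
    have h2 : f (h x) < f (h y) := by
      rw [hfx, hfy]
      have := hhy.1
      nlinarith [hhx.1, hhy.1]
    linarith
  · -- limit at 0⁺
    rw [tendsto_order]
    constructor
    · intro a ha
      set a' := max a 0 with ha'def
      have ha'0 : 0 ≤ a' := le_max_right _ _
      have ha'α : a' < α := max_lt ha hα
      have hfa' : α < f a' := hfα ▸ hfa ha'0 hα.le ha'α
      have ha'f : a' < f a' := lt_trans ha'α hfa'
      have htant : Filter.Tendsto (fun x => a' * (1 + Real.tan x ^ 2))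
          (nhdsWithin 0 (Set.Ioi 0)) (nhds (a' * (1 + Real.tan 0 ^ 2))) := by
        have hcont : ContinuousAt Real.tan 0 := by
          rw [Real.continuousAt_tan]; simp
        exact ((hcont.tendsto.mono_left nhdsWithin_le_nhds).pow 2).const_add 1
          |>.const_mul a'
      rw [Real.tan_zero] at htant
      norm_num at htant
      have hev := htant.eventually_lt_const ha'f
      filter_upwards [hev, hmem0] with x hx1 hx2
      obtain ⟨hhx, hfx⟩ := hh x hx2
      by_contra hle
      push_neg at hle
      have hhxa' : h x ≤ a' := le_trans hle (le_max_left _ _)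
      have h1 : f a' ≤ f (h x) := antiOn_of_strictAntiOn hfa hhx.1.le ha'0 hhxa'
      have hpos : 0 < 1 + Real.tan x ^ 2 := by positivity
      nlinarith [hfx]
    · intro a ha
      filter_upwards [hmem0] with x hx
      exact lt_trans (hh x hx).1.2 ha
  · -- limit at (π/2)⁻
    rw [tendsto_order]
    constructor
    · intro a ha
      filter_upwards [hmemπ] with x hx
      exact lt_trans ha (hh x hx).1.1
    · intro a ha
      set a' := min a α with ha'def
      have ha'0 : 0 < a' := lt_min ha hα
      have htant : Filter.Tendsto (fun x => a' * (1 + Real.tan x ^ 2))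
          (nhdsWithin (Real.pi / 2) (Set.Iio (Real.pi / 2))) Filter.atTop := by
        have h1 : Filter.Tendsto (fun x => Real.tan x ^ 2)
            (nhdsWithin (Real.pi / 2) (Set.Iio (Real.pi / 2))) Filter.atTop :=
          (tendsto_pow_atTop two_ne_zero).comp Real.tendsto_tan_pi_div_two
        exact (Filter.tendsto_atTop_add_const_left _ 1 h1).const_mul_atTop ha'0
      have hev := htant.eventually_gt_atTop (f a')
      filter_upwards [hev, hmemπ] with x hx1 hx2
      obtain ⟨hhx, hfx⟩ := hh x hx2
      by_contra hle
      push_neg at hle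
      have ha'hx : a' ≤ h x := le_trans (min_le_left _ _) hle
      have h1 : f (h x) ≤ f a' := antiOn_of_strictAntiOn hfa ha'0.le hhx.1.le ha'hx
      have hpos : 0 < 1 + Real.tan x ^ 2 := by positivity
      nlinarith [hfx]
end

section
/- Let α > 0 and let f : ℝ → ℝ be continuously differentiable with f′(r) < 0 for all r and f(α) = α. Let I ⊆ (0, π/2) be an interval and let λ : I → ℝ be differentiable with λ′(x) = cot(x)·( f(λ(x)) − λ(x)·(1 + tan(x)²) ) for all x ∈ I. Then there is at most one x ∈ I with f(λ(x)) = λ(x)·(1 + tan(x)²). -/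
open Real Set Filter Topology

/-- an orbit λ(x) of λ′ = cot(x)(f(λ) − λ(1+tan²x)) on an interval
I ⊆ (0,π/2) crosses the curve { f(λ) = λ(1+tan²x) } at most once, when f is C¹
with f′ < 0 and umbilical constant α > 0. -/
theorem stmt5 (α : ℝ) (hα : 0 < α) (f f' : ℝ → ℝ)
    (hf : ∀ r, HasDerivAt f (f' r) r) (hf'c : Continuous f')
    (hf'neg : ∀ r, f' r < 0) (hfα : f α = α)
    (I : Set ℝ) (hI : I ⊆ Set.Ioo 0 (Real.pi / 2)) (hIc : I.OrdConnected)
    (lam : ℝ → ℝ)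
    (hode : ∀ x ∈ I,
      HasDerivAt lam
        ((Real.cos x / Real.sin x) * (f (lam x) - lam x * (1 + Real.tan x ^ 2))) x) :
    ∀ x₁ ∈ I, ∀ x₂ ∈ I,
      f (lam x₁) = lam x₁ * (1 + Real.tan x₁ ^ 2) →
      f (lam x₂) = lam x₂ * (1 + Real.tan x₂ ^ 2) → x₁ = x₂ := by
  set g : ℝ → ℝ := fun x => f (lam x) - lam x * (1 + Real.tan x ^ 2) with hg
  have hanti : StrictAnti f := strictAnti_of_deriv_neg (fun x => by
    rw [(hf x).deriv]; exact hf'neg x)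
  -- derivative of g on I
  have hgd : ∀ x ∈ I, HasDerivAt g
      (f' (lam x) * ((Real.cos x / Real.sin x) * g x)
        - (((Real.cos x / Real.sin x) * g x) * (1 + Real.tan x ^ 2)
          + lam x * ((2 : ℕ) * Real.tan x ^ 1 * (1 / Real.cos x ^ 2)))) x := by
    intro x hx
    obtain ⟨hx0, hx2⟩ := hI hx
    have hcos : 0 < Real.cos x :=
      Real.cos_pos_of_mem_Ioo ⟨by linarith [Real.pi_pos], hx2⟩
    have h1 := (hf (lam x)).comp x (hode x hx)
    have htan := Real.hasDerivAt_tan hcos.ne'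
    have h2 := (htan.pow 2).const_add 1
    have h3 := (hode x hx).mul h2
    exact h1.sub h3
  -- at any zero of g in I, g has a strictly negative derivative
  have hzero : ∀ x ∈ I, g x = 0 → ∃ d, HasDerivAt g d x ∧ d < 0 := by
    intro x hx h0
    obtain ⟨hx0, hx2⟩ := hI hx
    have htanpos : 0 < Real.tan x := Real.tan_pos_of_pos_of_lt_pi_div_two hx0 hx2
    have hcos : 0 < Real.cos x :=
      Real.cos_pos_of_mem_Ioo ⟨by linarith [Real.pi_pos], hx2⟩
    have hg0 : f (lam x) = lam x * (1 + Real.tan x ^ 2) := by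
      have := h0; simp only [hg] at this; linarith
    have hlam : 0 < lam x := by
      by_contra h
      push_neg at h
      have h1 : f 0 ≤ f (lam x) := hanti.antitone h
      have h2 : α < f 0 := by rw [← hfα]; exact hanti hα
      nlinarith [sq_nonneg (Real.tan x)]
    refine ⟨_, hgd x hx, ?_⟩
    rw [h0]
    have hpos : 0 < lam x * ((2 : ℕ) * Real.tan x ^ 1 * (1 / Real.cos x ^ 2)) := by
      positivity
    nlinarith
  -- main symmetric claim
  have key : ∀ x₁ ∈ I, ∀ x₂ ∈ I, x₁ < x₂ → g x₁ = 0 → g x₂ = 0 → False := by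
    intro x₁ h1 x₂ h2 hlt hz1 hz2
    have hIcc : Icc x₁ x₂ ⊆ I := hIc.out h1 h2
    have hcont : ContinuousOn g (Icc x₁ x₂) := fun x hx =>
      ((hgd x (hIcc hx)).continuousAt).continuousWithinAt
    -- a point b just below x₂ with g b > 0
    obtain ⟨d2, hd2, hd2neg⟩ := hzero x₂ h2 hz2
    have hslope2 : Tendsto (slope g x₂) (𝓝[<] x₂) (𝓝 d2) :=
      (hasDerivAt_iff_tendsto_slope.mp hd2).mono_left
        (nhdsWithin_mono _ (fun y hy => ne_of_lt hy))
    have hev2 : ∀ᶠ y in 𝓝[<] x₂, slope g x₂ y < 0 := hslope2.eventually_lt_const hd2neg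
    have hmem2 : Ioo x₁ x₂ ∈ 𝓝[<] x₂ := Ioo_mem_nhdsLT_of_mem ⟨hlt, le_refl x₂⟩
    obtain ⟨b, hb1, hb2⟩ := (hev2.and (eventually_of_mem hmem2 fun y hy => hy)).exists
    have hgb : 0 < g b := by
      rw [slope_def_field, hz2] at hb1
      rcases div_neg_iff.mp hb1 with ⟨h, h'⟩ | ⟨h, h'⟩
      · linarith
      · linarith [hb2.2]
    -- the largest zero w of g in [x₁, b]
    set Z : Set ℝ := Icc x₁ b ∩ g ⁻¹' {0} with hZ
    have hx₁Z : x₁ ∈ Z := ⟨⟨le_rfl, hb2.1.le⟩, hz1⟩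
    have hZbdd : BddAbove Z := ⟨b, fun z hz => hz.1.2⟩
    have hIccb : Icc x₁ b ⊆ Icc x₁ x₂ := Icc_subset_Icc le_rfl hb2.2.le
    have hZclosed : IsClosed Z :=
      (hcont.mono hIccb).preimage_isClosed_of_isClosed isClosed_Icc isClosed_singleton
    have hZcomp : IsCompact Z :=
      isCompact_Icc.of_isClosed_subset hZclosed (inter_subset_left.trans hIccb)
    set w := sSup Z with hw
    have hwZ : w ∈ Z := hZcomp.sSup_mem ⟨x₁, hx₁Z⟩
    have hgw : g w = 0 := hwZ.2
    have hwI : w ∈ I := hIcc (hIccb hwZ.1)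
    have hwb : w < b := lt_of_le_of_ne hwZ.1.2 (fun h => by rw [h] at hgw; linarith)
    -- a point a just above w with g a < 0
    obtain ⟨dw, hdw, hdwneg⟩ := hzero w hwI hgw
    have hslopew : Tendsto (slope g w) (𝓝[>] w) (𝓝 dw) :=
      (hasDerivAt_iff_tendsto_slope.mp hdw).mono_left
        (nhdsWithin_mono _ (fun y hy => ne_of_gt hy))
    have hevw : ∀ᶠ y in 𝓝[>] w, slope g w y < 0 := hslopew.eventually_lt_const hdwneg
    have hmemw : Ioo w b ∈ 𝓝[>] w := Ioo_mem_nhdsGT_of_mem ⟨le_rfl, hwb⟩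
    obtain ⟨a, ha1, ha2⟩ := (hevw.and (eventually_of_mem hmemw fun y hy => hy)).exists
    have hga : g a < 0 := by
      rw [slope_def_field, hgw] at ha1
      rcases div_neg_iff.mp ha1 with ⟨h, h'⟩ | ⟨h, h'⟩
      · linarith [ha2.1]
      · linarith
    -- intermediate value between a and b gives a zero above w, contradiction
    have hab : a ≤ b := ha2.2.le
    have hsub : Icc a b ⊆ Icc x₁ x₂ :=
      Icc_subset_Icc (le_trans hwZ.1.1 ha2.1.le) hb2.2.le
    have hiv := intermediate_value_Icc hab (hcont.mono hsub)
    obtain ⟨c, hc, hgc⟩ := hiv ⟨hga.le, hgb.le⟩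
    have hcZ : c ∈ Z := ⟨⟨le_trans hwZ.1.1 (le_trans ha2.1.le hc.1), hc.2⟩, hgc⟩
    have : c ≤ w := le_csSup hZbdd hcZ
    linarith [lt_of_lt_of_le ha2.1 hc.1]
  intro x₁ h1 x₂ h2 e1 e2
  have hz1 : g x₁ = 0 := by simp only [hg]; linarith
  have hz2 : g x₂ = 0 := by simp only [hg]; linarith
  rcases lt_trichotomy x₁ x₂ with h | h | h
  · exact absurd (key x₁ h1 x₂ h2 h hz1 hz2) (fun h => h)
  · exact h
  · exact absurd (key x₂ h2 x₁ h1 h hz2 hz1) (fun h => h)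
end

section
/- There is no δ > 0, b ∈ ℝ, and twice differentiable function h : (0,δ) → ℝ such that, as x → 0⁺: h′(x) → 0, h′(x)·cot(x) → b, and h″(x)/(1 + h′(x)²) → +∞. -/
/-- no twice differentiable h : (0,δ) → ℝ can satisfy, as x → 0⁺:
h′(x) → 0, h′(x)·cot(x) → b ∈ ℝ, and h″(x)/(1+h′(x)²) → +∞. -/
theorem stmt9 :
    ¬ ∃ (δ : ℝ) (_ : 0 < δ) (b : ℝ) (h h' h'' : ℝ → ℝ),
      (∀ x ∈ Set.Ioo 0 δ, HasDerivAt h (h' x) x) ∧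
      (∀ x ∈ Set.Ioo 0 δ, HasDerivAt h' (h'' x) x) ∧
      Filter.Tendsto h' (nhdsWithin 0 (Set.Ioi 0)) (nhds 0) ∧
      Filter.Tendsto (fun x => h' x * (Real.cos x / Real.sin x))
        (nhdsWithin 0 (Set.Ioi 0)) (nhds b) ∧
      Filter.Tendsto (fun x => h'' x / (1 + h' x ^ 2))
        (nhdsWithin 0 (Set.Ioi 0)) Filter.atTop := by
  rintro ⟨δ, hδ, b, h, h', h'', hd1, hd2, hl0, hlb, hlinf⟩
  set C : ℝ := 2 * |b| + 4 with hCdef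
  have hCpos : 0 < C := by positivity
  have E1 : ∀ᶠ x in nhdsWithin 0 (Set.Ioi 0), C ≤ h'' x / (1 + h' x ^ 2) :=
    hlinf.eventually_ge_atTop C
  have E2 : Set.Ioo (0:ℝ) δ ∈ nhdsWithin 0 (Set.Ioi 0) :=
    Ioo_mem_nhdsGT_of_mem ⟨le_refl 0, hδ⟩
  obtain ⟨ε, hε, hsub⟩ :=
    mem_nhdsGT_iff_exists_Ioo_subset.mp ((E1.and E2).mono (fun x hx => hx))
  have hε0 : (0:ℝ) < ε := hε
  have key : ∀ x ∈ Set.Ioo (0:ℝ) ε, C ≤ h'' x / (1 + h' x ^ 2) ∧ x ∈ Set.Ioo 0 δ :=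
    fun x hx => hsub hx
  have hstep : ∀ x ∈ Set.Ioo (0:ℝ) ε, C * x ≤ h' x := by
    intro x hx
    have hx0 := hx.1
    have Ey : ∀ᶠ y in nhdsWithin 0 (Set.Ioi 0), y ∈ Set.Ioo 0 x :=
      Ioo_mem_nhdsGT_of_mem ⟨le_refl 0, hx0⟩
    have Hmvt : ∀ y ∈ Set.Ioo (0:ℝ) x, C * (x - y) + h' y ≤ h' x := by
      intro y hy
      have hyx : y < x := hy.2
      have hsubIcc : Set.Icc y x ⊆ Set.Ioo 0 δ := by
        intro z hz
        have hz1 : 0 < z := lt_of_lt_of_le hy.1 hz.1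
        have hz2 : z < ε := lt_of_le_of_lt hz.2 hx.2
        exact (key z ⟨hz1, hz2⟩).2
      have hcont : ContinuousOn h' (Set.Icc y x) := fun z hz =>
        ((hd2 z (hsubIcc hz)).continuousAt).continuousWithinAt
      obtain ⟨c, hc, hceq⟩ := exists_hasDerivAt_eq_slope h' h'' hyx hcont
        (fun z hz => hd2 z (hsubIcc ⟨le_of_lt hz.1, le_of_lt hz.2⟩))
      have hcmem : c ∈ Set.Ioo (0:ℝ) ε := ⟨lt_trans hy.1 hc.1, lt_trans hc.2 hx.2⟩
      have h1 : C ≤ h'' c := by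
        have h0 := (key c hcmem).1
        have hpos : (0:ℝ) < 1 + h' c ^ 2 := by positivity
        have h2 : C * (1 + h' c ^ 2) ≤ h'' c := (le_div_iff₀ hpos).mp h0
        nlinarith [sq_nonneg (h' c)]
      have h3 : C * (x - y) ≤ h'' c * (x - y) := by nlinarith
      rw [hceq] at h3
      have hxy : (0:ℝ) < x - y := by linarith
      rw [div_mul_cancel₀ _ (ne_of_gt hxy)] at h3
      linarith
    have Hlim : Filter.Tendsto (fun y => C * (x - y) + h' y) (nhdsWithin 0 (Set.Ioi 0))
        (nhds (C * x)) := by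
      have h1 : Filter.Tendsto (fun y : ℝ => y) (nhdsWithin 0 (Set.Ioi 0)) (nhds 0) :=
        Filter.tendsto_id.mono_left nhdsWithin_le_nhds
      have h2 : Filter.Tendsto (fun y : ℝ => C * (x - y) + h' y)
          (nhdsWithin 0 (Set.Ioi 0)) (nhds (C * (x - 0) + 0)) :=
        ((tendsto_const_nhds.sub h1).const_mul C).add hl0
      simpa using h2
    exact le_of_tendsto Hlim (Ey.mono Hmvt)
  have Efin : ∀ᶠ x in nhdsWithin 0 (Set.Ioi 0),
      h' x * (Real.cos x / Real.sin x) < |b| + 1 :=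
    hlb.eventually_lt_const (by cases abs_cases b <;> linarith)
  have Esmall : Set.Ioo (0:ℝ) (min ε 1) ∈ nhdsWithin 0 (Set.Ioi 0) :=
    Ioo_mem_nhdsGT_of_mem ⟨le_refl 0, lt_min hε0 one_pos⟩
  obtain ⟨x, hxlt, hxmem⟩ :=
    (Efin.and (Filter.eventually_of_mem Esmall (fun x hx => hx))).exists
  have hx0 : 0 < x := hxmem.1
  have hxε : x < ε := lt_of_lt_of_le hxmem.2 (min_le_left _ _)
  have hx1 : x < 1 := lt_of_lt_of_le hxmem.2 (min_le_right _ _)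
  have hsinpos : 0 < Real.sin x :=
    Real.sin_pos_of_pos_of_lt_pi hx0 (by linarith [Real.pi_gt_three])
  have hsinle : Real.sin x ≤ x := le_of_lt (Real.sin_lt hx0)
  have hcoshalf : (1:ℝ)/2 ≤ Real.cos x := by
    have := Real.one_sub_sq_div_two_le_cos (x := x)
    nlinarith
  have hcot : (1/2) / x ≤ Real.cos x / Real.sin x :=
    div_le_div₀ (by linarith) hcoshalf hsinpos hsinle
  have hCx : C * x ≤ h' x := hstep x ⟨hx0, hxε⟩
  have hcotnn : (0:ℝ) ≤ (1/2) / x := by positivity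
  have hCxnn : (0:ℝ) ≤ C * x := by positivity
  have hprod : C * x * ((1/2) / x) ≤ h' x * (Real.cos x / Real.sin x) :=
    mul_le_mul hCx hcot hcotnn (le_trans hCxnn hCx)
  have heq : C * x * ((1/2) / x) = C / 2 := by field_simp
  rw [heq] at hprod
  have : |b| + 2 ≤ |b| + 1 := by
    have : C / 2 = |b| + 2 := by rw [hCdef]; ring
    linarith
  linarith
end

section
/- Let M, A, C ∈ ℝ and y₁ > 0. Define λ : (0,∞) → ℝ by λ(y) = y^{M−1}·(1+y²)^{−M/2}·( C + A·∫_{y₁}^{y} s^{−M}·(1+s²)^{M/2−1} ds ). Then λ is differentiable on (0,∞) and satisfies y·(1+y²)·λ′(y) = M·λ(y) + A − λ(y)·(1+y²) for all y > 0. -/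
/-- the explicit function
λ(y) = y^(M−1)·(1+y²)^(−M/2)·(C + A·∫_{y₁}^y s^(−M)(1+s²)^(M/2−1) ds)
solves the linear rotational Weingarten ODE y(1+y²)λ′ = Mλ + A − λ(1+y²) on (0,∞). -/
theorem stmt10 (M A C y₁ : ℝ) (hy₁ : 0 < y₁) (lam : ℝ → ℝ)
    (hlam : ∀ y : ℝ, 0 < y →
      lam y = y ^ (M - 1) * (1 + y ^ 2) ^ (-(M / 2)) *
        (C + A * ∫ s in y₁..y, s ^ (-M) * (1 + s ^ 2) ^ (M / 2 - 1))) :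
    ∀ y : ℝ, 0 < y → ∃ d : ℝ, HasDerivAt lam d y ∧
      y * (1 + y ^ 2) * d = M * lam y + A - lam y * (1 + y ^ 2) := by
  intro y hy
  have hB : (0:ℝ) < 1 + y ^ 2 := by positivity
  set f : ℝ → ℝ := fun s => s ^ (-M) * (1 + s ^ 2) ^ (M / 2 - 1) with hfdef
  have hfc : ContinuousOn f (Set.Ioi (0:ℝ)) := by
    intro s hs
    have hs' : (0:ℝ) < s := hs
    have hBs : (0:ℝ) < 1 + s ^ 2 := by positivity
    apply ContinuousAt.continuousWithinAt
    exact (Real.continuousAt_rpow_const s _ (Or.inl hs'.ne')).mul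
      (((continuous_const.add (continuous_pow 2)).continuousAt).rpow_const
        (Or.inl hBs.ne'))
  have hsub : Set.uIcc y₁ y ⊆ Set.Ioi (0:ℝ) := by
    intro s hs
    rcases Set.mem_uIcc.mp hs with ⟨h1, _⟩ | ⟨h1, _⟩
    · exact lt_of_lt_of_le hy₁ h1
    · exact lt_of_lt_of_le hy h1
  have hint : HasDerivAt (fun t => ∫ s in y₁..t, f s) (f y) y := by
    apply intervalIntegral.integral_hasDerivAt_right
    · exact (hfc.mono hsub).intervalIntegrable
    · exact hfc.stronglyMeasurableAtFilter isOpen_Ioi y hy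
    · exact hfc.continuousAt (Ioi_mem_nhds hy)
  have hg1 : HasDerivAt (fun t : ℝ => t ^ (M - 1)) ((M - 1) * y ^ (M - 1 - 1)) y :=
    Real.hasDerivAt_rpow_const (Or.inl hy.ne')
  have hq : HasDerivAt (fun t : ℝ => 1 + t ^ 2) (2 * y) y := by
    simpa using (hasDerivAt_pow 2 y).const_add 1
  have hg2 : HasDerivAt (fun t : ℝ => (1 + t ^ 2) ^ (-(M / 2)))
      (2 * y * (-(M / 2)) * (1 + y ^ 2) ^ (-(M / 2) - 1)) y :=
    hq.rpow_const (Or.inl hB.ne')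
  have hh : HasDerivAt (fun t => C + A * ∫ s in y₁..t, f s) (A * f y) y :=
    (hint.const_mul A).const_add C
  set P : ℝ := C + A * ∫ s in y₁..y, f s with hP
  set d : ℝ := ((M - 1) * y ^ (M - 1 - 1) * (1 + y ^ 2) ^ (-(M / 2)) +
      y ^ (M - 1) * (2 * y * (-(M / 2)) * (1 + y ^ 2) ^ (-(M / 2) - 1))) * P +
      y ^ (M - 1) * (1 + y ^ 2) ^ (-(M / 2)) * (A * f y) with hd
  have hF : HasDerivAt
      (fun t : ℝ => t ^ (M - 1) * (1 + t ^ 2) ^ (-(M / 2)) *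
        (C + A * ∫ s in y₁..t, f s)) d y := (hg1.mul hg2).mul hh
  have heq : lam =ᶠ[nhds y]
      fun t : ℝ => t ^ (M - 1) * (1 + t ^ 2) ^ (-(M / 2)) *
        (C + A * ∫ s in y₁..t, f s) := by
    filter_upwards [Ioi_mem_nhds hy] with t ht
    exact hlam t ht
  refine ⟨d, hF.congr_of_eventuallyEq heq, ?_⟩
  have hlamy : lam y = y ^ (M - 1) * (1 + y ^ 2) ^ (-(M / 2)) * P := hlam y hy
  set a : ℝ := y ^ (M - 1) with hadef
  set b : ℝ := (1 + y ^ 2) ^ (-(M / 2)) with hbdef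
  have ha : 0 < a := Real.rpow_pos_of_pos hy _
  have hb : 0 < b := Real.rpow_pos_of_pos hB _
  have e1 : y ^ (M - 1 - 1) = a / y := by
    rw [hadef, Real.rpow_sub hy, Real.rpow_one]
  have e2 : (1 + y ^ 2) ^ (-(M / 2) - 1) = b / (1 + y ^ 2) := by
    rw [hbdef, Real.rpow_sub hB, Real.rpow_one]
  have e3 : y ^ (-M) = (a * y)⁻¹ := by
    rw [Real.rpow_neg hy.le]
    congr 1
    rw [hadef, ← Real.rpow_add_one hy.ne']
    norm_num
  have e4 : (1 + y ^ 2) ^ (M / 2 - 1) = (b * (1 + y ^ 2))⁻¹ := by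
    rw [hbdef, ← Real.rpow_add_one hB.ne', ← Real.rpow_neg hB.le]
    congr 1
    ring
  have hfy : f y = (a * y)⁻¹ * (b * (1 + y ^ 2))⁻¹ := by
    rw [hfdef]; simp only []; rw [e3, e4]
  rw [hlamy, hd, hfy, e1, e2]
  field_simp
  ring
end

section
/- Let M < 0, A ∈ ℝ, and C₀ ∈ ℝ with C₀ ≠ 0. Define λ : (0,∞) → ℝ by λ(y) = y^{M−1}·(1+y²)^{−M/2}·( C₀ + A·∫₀^{y} s^{−M}·(1+s²)^{M/2−1} ds ) (the integral converges since −M > 0). Then |y·λ(y)| → +∞ as y → 0⁺. -/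
/-- for M < 0 and C₀ ≠ 0, the explicit solution
λ(y) = y^(M−1)(1+y²)^(−M/2)(C₀ + A·∫₀^y s^(−M)(1+s²)^(M/2−1) ds)
satisfies |y·λ(y)| → +∞ as y → 0⁺. -/
theorem stmt13 (M A C₀ : ℝ) (hM : M < 0) (hC : C₀ ≠ 0) (lam : ℝ → ℝ)
    (hlam : ∀ y : ℝ, 0 < y →
      lam y = y ^ (M - 1) * (1 + y ^ 2) ^ (-(M / 2)) *
        (C₀ + A * ∫ s in (0 : ℝ)..y, s ^ (-M) * (1 + s ^ 2) ^ (M / 2 - 1))) :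
    Filter.Tendsto (fun y => |y * lam y|) (nhdsWithin 0 (Set.Ioi 0)) Filter.atTop := by
  set I : ℝ → ℝ := fun y => ∫ s in (0 : ℝ)..y, s ^ (-M) * (1 + s ^ 2) ^ (M / 2 - 1) with hIdef
  -- bound on the integral
  have hIbound : ∀ y ∈ Set.Ioc (0:ℝ) 1, |I y| ≤ y := by
    intro y hy
    have hb : ∀ s ∈ Set.uIoc (0:ℝ) y,
        ‖s ^ (-M) * (1 + s ^ 2) ^ (M / 2 - 1)‖ ≤ 1 := by
      intro s hs
      rw [Set.uIoc_of_le hy.1.le] at hs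
      have hs0 : 0 < s := hs.1
      have hs1 : s ≤ 1 := hs.2.trans hy.2
      have h1 : s ^ (-M) ≤ 1 :=
        Real.rpow_le_one hs0.le hs1 (by linarith)
      have h2 : (1 + s ^ 2) ^ (M / 2 - 1) ≤ 1 :=
        Real.rpow_le_one_of_one_le_of_nonpos (by nlinarith) (by linarith)
      have hp1 : (0:ℝ) ≤ s ^ (-M) := Real.rpow_nonneg hs0.le _
      have hp2 : (0:ℝ) ≤ (1 + s ^ 2) ^ (M / 2 - 1) := Real.rpow_nonneg (by nlinarith) _
      rw [Real.norm_eq_abs, abs_of_nonneg (mul_nonneg hp1 hp2)]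
      calc s ^ (-M) * (1 + s ^ 2) ^ (M / 2 - 1) ≤ 1 * 1 := by
            apply mul_le_mul h1 h2 hp2 zero_le_one
        _ = 1 := by ring
    have := intervalIntegral.norm_integral_le_of_norm_le_const hb
    simpa [abs_of_nonneg hy.1.le] using this
  -- I → 0 as y → 0⁺
  have hI0 : Filter.Tendsto I (nhdsWithin 0 (Set.Ioi 0)) (nhds 0) := by
    apply squeeze_zero_norm'
    · filter_upwards [Ioc_mem_nhdsGT_of_mem (by norm_num : (0:ℝ) ∈ Set.Ico (0:ℝ) 1)]
        with y hy
      simpa using hIbound y hy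
    · exact Filter.tendsto_id.mono_left nhdsWithin_le_nhds
  -- bracket → C₀
  have hbr : Filter.Tendsto (fun y => C₀ + A * I y) (nhdsWithin 0 (Set.Ioi 0)) (nhds C₀) := by
    have := (tendsto_const_nhds (x := C₀)).add ((tendsto_const_nhds (x := A)).mul hI0)
    simpa using this
  have habs : Filter.Tendsto (fun y => |C₀ + A * I y|) (nhdsWithin 0 (Set.Ioi 0)) (nhds |C₀|) :=
    hbr.abs
  -- (1+y²)^(−M/2) → 1
  have hpow : Filter.Tendsto (fun y : ℝ => (1 + y ^ 2) ^ (-(M / 2)))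
      (nhdsWithin 0 (Set.Ioi 0)) (nhds 1) := by
    have hc : ContinuousAt (fun y : ℝ => (1 + y ^ 2) ^ (-(M / 2))) 0 := by
      apply ContinuousAt.rpow_const
      · fun_prop
      · left; norm_num
    have h := hc.tendsto.mono_left (nhdsWithin_le_nhds (s := Set.Ioi 0))
    simpa using h
  -- y^M → ∞
  have hyM : Filter.Tendsto (fun y : ℝ => y ^ M) (nhdsWithin 0 (Set.Ioi 0)) Filter.atTop := by
    have h1 : Filter.Tendsto (fun y : ℝ => y⁻¹) (nhdsWithin 0 (Set.Ioi 0)) Filter.atTop :=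
      tendsto_inv_nhdsGT_zero
    have h2 : Filter.Tendsto (fun x : ℝ => x ^ (-M)) Filter.atTop Filter.atTop :=
      tendsto_rpow_atTop (by linarith)
    have h3 := h2.comp h1
    apply h3.congr'
    filter_upwards [self_mem_nhdsWithin] with y hy
    have hy0 : (0:ℝ) < y := hy
    simp only [Function.comp]
    rw [Real.inv_rpow hy0.le, ← Real.rpow_neg hy0.le, neg_neg]
  -- combine
  have hmain := hyM.atTop_mul_pos (C := 1 * |C₀|)
    (by positivity) (hpow.mul habs)
  apply hmain.congr'
  filter_upwards [self_mem_nhdsWithin] with y hy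
  have hy0 : (0:ℝ) < y := hy
  rw [hlam y hy0]
  have hyM' : y * y ^ (M - 1) = y ^ M := by
    have h := Real.rpow_add hy0 1 (M - 1)
    rw [Real.rpow_one] at h
    rw [← h]; norm_num
  have hpB : (0:ℝ) < (1 + y ^ 2) ^ (-(M / 2)) := Real.rpow_pos_of_pos (by positivity) _
  have hpA : (0:ℝ) < y ^ M := Real.rpow_pos_of_pos hy0 _
  rw [show y * (y ^ (M - 1) * (1 + y ^ 2) ^ (-(M / 2)) * (C₀ + A * I y))
      = (y * y ^ (M - 1)) * (1 + y ^ 2) ^ (-(M / 2)) * (C₀ + A * I y) by ring, hyM']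
  rw [abs_mul, abs_mul, abs_of_pos hpA, abs_of_pos hpB]
  ring
end

section
/- Let M < 0 and A ∈ ℝ. Define λ : (0,∞) → ℝ by λ(y) = y^{M−1}·(1+y²)^{−M/2}·A·∫₀^{y} s^{−M}·(1+s²)^{M/2−1} ds (the integral converges since −M > 0). Then λ(y) → A/(1−M) as y → 0⁺. -/
open Filter Real Set intervalIntegral

/-- for M < 0, the explicit bounded solution
λ(y) = y^(M−1)(1+y²)^(−M/2)·A·∫₀^y s^(−M)(1+s²)^(M/2−1) ds
converges to A/(1−M) as y → 0⁺. -/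
theorem stmt14 (M A : ℝ) (hM : M < 0) (lam : ℝ → ℝ)
    (hlam : ∀ y : ℝ, 0 < y →
      lam y = y ^ (M - 1) * (1 + y ^ 2) ^ (-(M / 2)) *
        (A * ∫ s in (0 : ℝ)..y, s ^ (-M) * (1 + s ^ 2) ^ (M / 2 - 1))) :
    Filter.Tendsto lam (nhdsWithin 0 (Set.Ioi 0)) (nhds (A / (1 - M))) := by
  have h1M : (0:ℝ) < 1 - M := by linarith
  set f : ℝ → ℝ := fun s => s ^ (-M) * (1 + s ^ 2) ^ (M / 2 - 1) with hf
  set g : ℝ → ℝ := fun y => y ^ (M - 1) * ∫ s in (0:ℝ)..y, f s with hg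
  -- continuity of f
  have hfc : Continuous f := by
    apply Continuous.mul
    · exact Real.continuous_rpow_const (by linarith)
    · apply Continuous.rpow_const (by continuity)
      intro x; left; positivity
  -- integral of s^(-M)
  have hpow : ∀ y : ℝ, 0 < y → (∫ s in (0:ℝ)..y, s ^ (-M)) = y ^ (1 - M) / (1 - M) := by
    intro y hy
    rw [integral_rpow (Or.inl (by linarith)), Real.zero_rpow (show (-M:ℝ) + 1 ≠ 0 from ne_of_gt (by linarith)),
      show (-M:ℝ) + 1 = 1 - M from by ring]
    ring_nf
  -- bounds on g for y > 0
  have hbound : ∀ y : ℝ, 0 < y →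
      (1 + y ^ 2) ^ (M / 2 - 1) / (1 - M) ≤ g y ∧ g y ≤ 1 / (1 - M) := by
    intro y hy
    have hyM : (0:ℝ) < y ^ (M - 1) := Real.rpow_pos_of_pos hy _
    have hInt1 : IntervalIntegrable f MeasureTheory.volume 0 y :=
      hfc.intervalIntegrable 0 y
    have hInt2 : IntervalIntegrable (fun s : ℝ => s ^ (-M)) MeasureTheory.volume 0 y :=
      (Real.continuous_rpow_const (by linarith)).intervalIntegrable 0 y
    have hInt3 : IntervalIntegrable
        (fun s : ℝ => s ^ (-M) * (1 + y ^ 2) ^ (M / 2 - 1)) MeasureTheory.volume 0 y :=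
      hInt2.mul_const _
    have hupper : (∫ s in (0:ℝ)..y, f s) ≤ y ^ (1 - M) / (1 - M) := by
      rw [← hpow y hy]
      apply integral_mono_on hy.le hInt1 hInt2
      intro s hs
      have hs0 : 0 ≤ s := hs.1
      have h1 : (1 + s ^ 2) ^ (M / 2 - 1) ≤ 1 :=
        Real.rpow_le_one_of_one_le_of_nonpos (by nlinarith) (by linarith)
      have h2 : (0:ℝ) ≤ s ^ (-M) := Real.rpow_nonneg hs0 _
      calc f s ≤ s ^ (-M) * 1 := mul_le_mul_of_nonneg_left h1 h2
        _ = s ^ (-M) := mul_one _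
    have hlower : (1 + y ^ 2) ^ (M / 2 - 1) * (y ^ (1 - M) / (1 - M)) ≤
        ∫ s in (0:ℝ)..y, f s := by
      have : (∫ s in (0:ℝ)..y, s ^ (-M) * (1 + y ^ 2) ^ (M / 2 - 1)) ≤
          ∫ s in (0:ℝ)..y, f s := by
        apply integral_mono_on hy.le hInt3 hInt1
        intro s hs
        have hs0 : 0 ≤ s := hs.1
        have h1 : (1 + y ^ 2) ^ (M / 2 - 1) ≤ (1 + s ^ 2) ^ (M / 2 - 1) :=
          Real.rpow_le_rpow_of_nonpos (by nlinarith) (by nlinarith [hs.2]) (by linarith)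
        exact mul_le_mul_of_nonneg_left h1 (Real.rpow_nonneg hs0 _)
      calc (1 + y ^ 2) ^ (M / 2 - 1) * (y ^ (1 - M) / (1 - M))
          = ∫ s in (0:ℝ)..y, s ^ (-M) * (1 + y ^ 2) ^ (M / 2 - 1) := by
            rw [intervalIntegral.integral_mul_const, hpow y hy]; ring
        _ ≤ _ := this
    have hcancel : y ^ (M - 1) * y ^ (1 - M) = 1 := by
      rw [← Real.rpow_add hy]; norm_num
    constructor
    · have := mul_le_mul_of_nonneg_left hlower hyM.le
      calc (1 + y ^ 2) ^ (M / 2 - 1) / (1 - M)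
          = y ^ (M - 1) * ((1 + y ^ 2) ^ (M / 2 - 1) * (y ^ (1 - M) / (1 - M))) := by
            rw [show y ^ (M - 1) * ((1 + y ^ 2) ^ (M / 2 - 1) * (y ^ (1 - M) / (1 - M))) =
              y ^ (M - 1) * y ^ (1 - M) * ((1 + y ^ 2) ^ (M / 2 - 1) / (1 - M)) from by ring,
              hcancel, one_mul]
        _ ≤ g y := this
    · have := mul_le_mul_of_nonneg_left hupper hyM.le
      calc g y ≤ y ^ (M - 1) * (y ^ (1 - M) / (1 - M)) := this
        _ = 1 / (1 - M) := by rw [mul_div_assoc'] at *; rw [hcancel]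
  -- g tends to 1/(1-M)
  have hgt : Tendsto g (nhdsWithin 0 (Set.Ioi 0)) (nhds (1 / (1 - M))) := by
    have hLc : Tendsto (fun y : ℝ => (1 + y ^ 2) ^ (M / 2 - 1) / (1 - M))
        (nhdsWithin 0 (Set.Ioi 0)) (nhds (1 / (1 - M))) := by
      have : ContinuousAt (fun y : ℝ => (1 + y ^ 2) ^ (M / 2 - 1) / (1 - M)) 0 := by
        apply ContinuousAt.div_const
        apply ContinuousAt.rpow_const (by fun_prop)
        left; norm_num
      have h2 : ((1:ℝ) + 0 ^ 2) ^ (M / 2 - 1) / (1 - M) = 1 / (1 - M) := by norm_num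
      exact (h2 ▸ this.tendsto).mono_left nhdsWithin_le_nhds
    refine tendsto_of_tendsto_of_tendsto_of_le_of_le' hLc tendsto_const_nhds ?_ ?_
    · filter_upwards [self_mem_nhdsWithin] with y hy using (hbound y hy).1
    · filter_upwards [self_mem_nhdsWithin] with y hy using (hbound y hy).2
  -- combine
  have hcc : Tendsto (fun y : ℝ => (1 + y ^ 2) ^ (-(M / 2)))
      (nhdsWithin 0 (Set.Ioi 0)) (nhds 1) := by
    have : ContinuousAt (fun y : ℝ => (1 + y ^ 2) ^ (-(M / 2))) 0 := by
      apply ContinuousAt.rpow_const (by fun_prop)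
      left; norm_num
    have h2 : ((1:ℝ) + 0 ^ 2) ^ (-(M / 2)) = 1 := by norm_num
    exact (h2 ▸ this.tendsto).mono_left nhdsWithin_le_nhds
  have hmain : Tendsto (fun y : ℝ => (1 + y ^ 2) ^ (-(M / 2)) * (A * g y))
      (nhdsWithin 0 (Set.Ioi 0)) (nhds (A / (1 - M))) := by
    have := hcc.mul ((hgt.const_mul A))
    have heq : 1 * (A * (1 / (1 - M))) = A / (1 - M) := by ring
    rwa [heq] at this
  refine hmain.congr' ?_
  filter_upwards [self_mem_nhdsWithin] with y hy
  rw [hlam y hy]; simp only [hg]; ring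
end

section
/- Let f, F : ℝ → ℝ be continuous with f(r) < F(r) for all r ∈ ℝ. Let y₀ > 0 and let u, v : (0, y₀] → ℝ be differentiable with y·(1+y²)·u′(y) = f(u(y)) − u(y)·(1+y²) and y·(1+y²)·v′(y) = F(v(y)) − v(y)·(1+y²) for all y ∈ (0, y₀], and u(y₀) = v(y₀). Then v(y) < u(y) for all y ∈ (0, y₀). -/
/-- comparison principle: if f < F pointwise and u, v solve the
rotational Weingarten ODE on (0,y₀] with f and F respectively, with u(y₀) = v(y₀),
then v < u on (0,y₀). -/
theorem stmt15 (f F : ℝ → ℝ) (hf : Continuous f) (hF : Continuous F)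
    (hlt : ∀ r, f r < F r) (y₀ : ℝ) (hy₀ : 0 < y₀)
    (u v u' v' : ℝ → ℝ)
    (hud : ∀ y ∈ Set.Ioc 0 y₀, HasDerivAt u (u' y) y)
    (hvd : ∀ y ∈ Set.Ioc 0 y₀, HasDerivAt v (v' y) y)
    (huode : ∀ y ∈ Set.Ioc 0 y₀,
      y * (1 + y ^ 2) * u' y = f (u y) - u y * (1 + y ^ 2))
    (hvode : ∀ y ∈ Set.Ioc 0 y₀,
      y * (1 + y ^ 2) * v' y = F (v y) - v y * (1 + y ^ 2))
    (heq : u y₀ = v y₀) :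
    ∀ y ∈ Set.Ioo 0 y₀, v y < u y := by
  set w : ℝ → ℝ := fun y => v y - u y with hwdef
  have hwy₀ : w y₀ = 0 := by simp [hwdef, heq]
  have hwderiv : ∀ c ∈ Set.Ioc 0 y₀, HasDerivAt w (v' c - u' c) c := fun c hc =>
    (hvd c hc).sub (hud c hc)
  have keyA : ∀ c ∈ Set.Ioc 0 y₀, w c = 0 → 0 < v' c - u' c := by
    intro c hc hwc
    have hc0 : 0 < c := hc.1
    have hvu : v c = u c := by simp [hwdef] at hwc; linarith
    have h1 := huode c hc
    have h2 := hvode c hc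
    rw [hvu] at h2
    have hpos : 0 < c * (1 + c ^ 2) := by positivity
    nlinarith [hlt (u c)]
  -- slope facts at zeros of w
  have keyslope : ∀ c ∈ Set.Ioc 0 y₀, w c = 0 →
      (∀ᶠ y in nhdsWithin c (Set.Iio c), w y < 0) ∧
      (∀ᶠ y in nhdsWithin c (Set.Ioi c), 0 < w y) := by
    intro c hc hwc
    have hd : 0 < v' c - u' c := keyA c hc hwc
    have htend := hasDerivAt_iff_tendsto_slope.mp (hwderiv c hc)
    have hpos : ∀ᶠ y in nhdsWithin c {c}ᶜ, 0 < slope w c y :=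
      htend.eventually (eventually_gt_nhds hd)
    constructor
    · have h1 := hpos.filter_mono
        (nhdsWithin_mono c (fun x (hx : x ∈ Set.Iio c) => ne_of_lt hx))
      filter_upwards [h1, self_mem_nhdsWithin] with y hy hy'
      rw [slope_def_field, hwc, sub_zero] at hy
      rcases div_pos_iff.mp hy with ⟨_, h⟩ | ⟨h, _⟩
      · exfalso; have : y - c < 0 := sub_neg.mpr hy'; linarith
      · linarith
    · have h1 := hpos.filter_mono
        (nhdsWithin_mono c (fun x (hx : x ∈ Set.Ioi c) => ne_of_gt hx))
      filter_upwards [h1, self_mem_nhdsWithin] with y hy hy'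
      rw [slope_def_field, hwc, sub_zero] at hy
      rcases div_pos_iff.mp hy with ⟨h, _⟩ | ⟨_, h⟩
      · linarith
      · exfalso; have : 0 < y - c := sub_pos.mpr hy'; linarith
  intro a ha
  by_contra hcon
  push_neg at hcon
  have hwa : 0 ≤ w a := by simp [hwdef]; linarith
  set S : Set ℝ := {y | y ∈ Set.Ico a y₀ ∧ 0 ≤ w y} with hSdef
  have haS : a ∈ S := ⟨⟨le_refl a, ha.2⟩, hwa⟩
  have hbdd : BddAbove S := ⟨y₀, fun y hy => hy.1.2.le⟩
  set c := sSup S with hcdef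
  have hac : a ≤ c := le_csSup hbdd haS
  have hcy : c ≤ y₀ := csSup_le ⟨a, haS⟩ (fun y hy => hy.1.2.le)
  rcases lt_or_eq_of_le hcy with hclt | hceq
  · -- c < y₀
    have hcIoc : c ∈ Set.Ioc 0 y₀ := ⟨lt_of_lt_of_le ha.1 hac, hcy⟩
    have hcont : ContinuousAt w c := (hwderiv c hcIoc).continuousAt
    have hneg : ∀ y ∈ Set.Ioo c y₀, w y < 0 := by
      intro y hy
      by_contra h
      push_neg at h
      have : y ∈ S := ⟨⟨le_trans hac hy.1.le, hy.2⟩, h⟩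
      exact absurd (le_csSup hbdd this) (not_le.mpr hy.1)
    have hwc0 : w c = 0 := by
      rcases lt_trichotomy (w c) 0 with h | h | h
      · exfalso
        have hev : ∀ᶠ y in nhds c, w y < 0 := hcont.eventually (eventually_lt_nhds h)
        rcases Metric.eventually_nhds_iff.mp hev with ⟨δ, hδ, hball⟩
        obtain ⟨y, hyS, hy⟩ := exists_lt_of_lt_csSup ⟨a, haS⟩ (show c - δ < c by linarith)
        have hyc : y ≤ c := le_csSup hbdd hyS
        have : w y < 0 := hball (by rw [Real.dist_eq]; rw [abs_lt]; constructor <;> linarith)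
        linarith [hyS.2]
      · exact h
      · exfalso
        have hev : ∀ᶠ y in nhds c, 0 < w y := hcont.eventually (eventually_gt_nhds h)
        rcases Metric.eventually_nhds_iff.mp hev with ⟨δ, hδ, hball⟩
        have : ∃ y, c < y ∧ y < min (c + δ) y₀ := exists_between (lt_min (by linarith) hclt)
        obtain ⟨y, hy1, hy2⟩ := this
        have h1 : 0 < w y := hball (by
          rw [Real.dist_eq, abs_lt]
          have := lt_of_lt_of_le hy2 (min_le_left _ _)
          constructor <;> linarith)
        have h2 : w y < 0 := hneg y ⟨hy1, lt_of_lt_of_le hy2 (min_le_right _ _)⟩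
        linarith
    have hslope := (keyslope c hcIoc hwc0).2
    have hIoo : Set.Ioo c y₀ ∈ nhdsWithin c (Set.Ioi c) :=
      Ioo_mem_nhdsGT_of_mem ⟨le_refl c, hclt⟩
    obtain ⟨y, hy1, hy2⟩ := (hslope.and (Filter.eventually_of_mem hIoo (fun y hy => hy))).exists
    exact absurd (hneg y hy2) (not_lt.mpr hy1.le)
  · -- c = y₀
    have hslope := (keyslope y₀ ⟨hy₀, le_refl y₀⟩ hwy₀).1
    rcases mem_nhdsLT_iff_exists_Ioo_subset.mp hslope with ⟨b, hb, hsub⟩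
    obtain ⟨y, hyS, hy⟩ := exists_lt_of_lt_csSup ⟨a, haS⟩ (show b < c from hceq ▸ hb)
    have hy₀' : y < y₀ := hyS.1.2
    have : w y < 0 := hsub ⟨hy, hy₀'⟩
    linarith [hyS.2]
end

section
/- Let f : ℝ → ℝ be differentiable and suppose there are constants Λ₁ ≤ Λ₂ < 0 with Λ₁ ≤ f′(r) ≤ Λ₂ for all r ∈ ℝ. Let y₀ > 0 and let λ : (0, y₀] → ℝ be differentiable with y·(1+y²)·λ′(y) = f(λ(y)) − λ(y)·(1+y²) for all y ∈ (0, y₀]. If λ(y) → +∞ as y → 0⁺, then y·λ(y) → +∞ as y → 0⁺. -/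
open Set Filter Real Topology

/-- Mean value helper: nonpositive derivative on an interval forces `F b ≤ F a`. -/
private lemma mvt_le {F F' : ℝ → ℝ} {a b : ℝ} (hab : a < b)
    (h : ∀ x ∈ Set.Icc a b, HasDerivAt F (F' x) x)
    (h' : ∀ x ∈ Set.Ioo a b, F' x ≤ 0) : F b ≤ F a := by
  obtain ⟨c, hc, heq⟩ := exists_hasDerivAt_eq_slope F F' hab
    (fun x hx => (h x hx).continuousAt.continuousWithinAt)
    (fun x hx => h x (Set.Ioo_subset_Icc_self hx))
  have h1 := h' c hc
  rw [heq] at h1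
  have hba : (0:ℝ) < b - a := sub_pos.mpr hab
  have h2 := mul_le_mul_of_nonneg_right h1 hba.le
  rw [div_mul_cancel₀ _ hba.ne', zero_mul] at h2
  linarith

/-- for a uniformly elliptic f (Λ₁ ≤ f′ ≤ Λ₂ < 0), any solution of
y(1+y²)λ′ = f(λ) − λ(1+y²) on (0,y₀] with λ(y) → +∞ as y → 0⁺ satisfies
y·λ(y) → +∞ as y → 0⁺. -/
theorem stmt16 (Λ₁ Λ₂ : ℝ) (hΛ : Λ₁ ≤ Λ₂) (hΛ2 : Λ₂ < 0)
    (f f' : ℝ → ℝ) (hf : ∀ r, HasDerivAt f (f' r) r)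
    (hpinch : ∀ r, Λ₁ ≤ f' r ∧ f' r ≤ Λ₂)
    (y₀ : ℝ) (hy₀ : 0 < y₀) (lam lam' : ℝ → ℝ)
    (hd : ∀ y ∈ Set.Ioc 0 y₀, HasDerivAt lam (lam' y) y)
    (hode : ∀ y ∈ Set.Ioc 0 y₀,
      y * (1 + y ^ 2) * lam' y = f (lam y) - lam y * (1 + y ^ 2))
    (hblow : Filter.Tendsto lam (nhdsWithin 0 (Set.Ioi 0)) Filter.atTop) :
    Filter.Tendsto (fun y => y * lam y) (nhdsWithin 0 (Set.Ioi 0)) Filter.atTop := by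
  -- Linear upper bound on f from the pinching of f'
  have hfb : ∀ r : ℝ, 0 ≤ r → f r ≤ f 0 + Λ₂ * r := by
    intro r hr
    rcases eq_or_lt_of_le hr with h | h
    · simp [← h]
    · obtain ⟨c, _, heq⟩ := exists_hasDerivAt_eq_slope f f' h
        (fun x _ => (hf x).continuousAt.continuousWithinAt)
        (fun x _ => hf x)
      have h2 := (hpinch c).2
      rw [heq, sub_zero] at h2
      have h3 : f r - f 0 ≤ Λ₂ * r := by
        calc f r - f 0 = (f r - f 0) / r * r := (div_mul_cancel₀ _ h.ne').symm
          _ ≤ Λ₂ * r := mul_le_mul_of_nonneg_right h2 h.le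
      linarith
  set A : ℝ := max 1 (-2 * f 0 / Λ₂) with hA
  have hA1 : (1:ℝ) ≤ A := le_max_left _ _
  have hfA : ∀ r : ℝ, A ≤ r → f r ≤ Λ₂ * r / 2 := by
    intro r hr
    have h0 : 0 ≤ r := le_trans (by linarith) hr
    have h1 := hfb r h0
    have h2 : -2 * f 0 / Λ₂ ≤ A := le_max_right _ _
    rw [div_le_iff_of_neg hΛ2] at h2
    have h4 : Λ₂ * r ≤ Λ₂ * A := mul_le_mul_of_nonpos_left hr hΛ2.le
    linarith
  -- pick δ where lam ≥ A
  have hev : {y : ℝ | A ≤ lam y} ∈ 𝓝[>] (0:ℝ) := hblow.eventually (eventually_ge_atTop A)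
  obtain ⟨u, hu, hsub⟩ := mem_nhdsGT_iff_exists_Ioc_subset.mp hev
  set δ : ℝ := min (min y₀ 1) u with hδdef
  have hδ : 0 < δ := lt_min (lt_min hy₀ one_pos) hu
  have hδy₀ : δ ≤ y₀ := (min_le_left _ _).trans (min_le_left _ _)
  have hδ1 : δ ≤ 1 := (min_le_left _ _).trans (min_le_right _ _)
  have hδu : δ ≤ u := min_le_right _ _
  have hmem : ∀ y ∈ Set.Ioc 0 δ, y ∈ Set.Ioc 0 y₀ :=
    fun y hy => ⟨hy.1, hy.2.trans hδy₀⟩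
  have hlamA : ∀ y ∈ Set.Ioc 0 δ, A ≤ lam y :=
    fun y hy => hsub ⟨hy.1, hy.2.trans hδu⟩
  -- derivative of g(y) = y * lam y
  set G' : ℝ → ℝ := fun y => f (lam y) / (1 + y ^ 2) with hG'
  have hdg : ∀ y ∈ Set.Ioc 0 y₀, HasDerivAt (fun y => y * lam y) (G' y) y := by
    intro y hy
    have h1 := (hasDerivAt_id y).mul (hd y hy)
    have hpos : (0:ℝ) < 1 + y ^ 2 := by positivity
    have heq : 1 * lam y + y * lam' y = G' y := by
      rw [hG']
      rw [eq_div_iff hpos.ne']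
      linear_combination hode y hy
    simp only [id_eq] at h1
    rwa [heq] at h1
  -- bound on G' on (0, δ]
  have hG'le : ∀ y ∈ Set.Ioc 0 δ, G' y ≤ Λ₂ * lam y / 4 := by
    intro y hy
    have hAle := hlamA y hy
    have hfle := hfA (lam y) hAle
    have hl0 : (0:ℝ) ≤ lam y := by linarith
    have hq : Λ₂ * lam y ≤ 0 := mul_nonpos_of_nonpos_of_nonneg hΛ2.le hl0
    have h12 : 1 + y ^ 2 ≤ 2 := by nlinarith [hy.1, hy.2.trans hδ1]
    have hpos : (0:ℝ) < 1 + y ^ 2 := by positivity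
    rw [hG']
    rw [div_le_iff₀ hpos]
    nlinarith [hq, h12, hfle]
  have hG'neg : ∀ y ∈ Set.Ioc 0 δ, G' y ≤ 0 := by
    intro y hy
    have h1 := hG'le y hy
    have hl0 : (0:ℝ) ≤ lam y := by linarith [hlamA y hy, hA1]
    nlinarith [mul_nonpos_of_nonpos_of_nonneg hΛ2.le hl0]
  -- g is antitone on (0, δ]
  have hganti : ∀ y ∈ Set.Ioc 0 δ, δ * lam δ ≤ y * lam y := by
    intro y hy
    rcases eq_or_lt_of_le hy.2 with h | h
    · rw [h]
    · exact mvt_le h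
        (fun x hx => hdg x ⟨lt_of_lt_of_le hy.1 hx.1, hx.2.trans hδy₀⟩)
        (fun x hx => hG'neg x ⟨hy.1.trans hx.1, hx.2.le⟩)
  set c₀ : ℝ := δ * lam δ with hc₀def
  have hc₀ : 0 < c₀ := by
    have := hlamA δ ⟨hδ, le_refl δ⟩
    have : (0:ℝ) < lam δ := by linarith
    exact mul_pos hδ this
  set K : ℝ := -Λ₂ * c₀ / 4 with hKdef
  have hK : 0 < K := by
    have : 0 < -Λ₂ := neg_pos.mpr hΛ2
    positivity
  -- φ(y) = y * lam y + K * log y has nonpositive derivative on (0, δ]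
  set φ : ℝ → ℝ := fun y => y * lam y + K * Real.log y with hφdef
  have hdφ : ∀ y ∈ Set.Ioc 0 δ, HasDerivAt φ (G' y + K * y⁻¹) y := by
    intro y hy
    exact (hdg y (hmem y hy)).add ((Real.hasDerivAt_log hy.1.ne').const_mul K)
  have hφ'neg : ∀ y ∈ Set.Ioc 0 δ, G' y + K * y⁻¹ ≤ 0 := by
    intro y hy
    have h1 := hG'le y hy
    have h2 := hganti y hy
    have hy0 : 0 < y := hy.1
    have h4 : (G' y + K * y⁻¹) * y ≤ 0 := by
      have hKy : K * y⁻¹ * y = K := by field_simp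
      have h5 : G' y * y ≤ Λ₂ * lam y / 4 * y :=
        mul_le_mul_of_nonneg_right h1 hy0.le
      have h6 : Λ₂ * (y * lam y) ≤ Λ₂ * c₀ := mul_le_mul_of_nonpos_left h2 hΛ2.le
      nlinarith [h5, h6, hKy]
    nlinarith [h4, hy0]
  -- hence φ(y) ≥ φ(δ) on (0, δ]
  have hφlow : ∀ y ∈ Set.Ioc 0 δ, φ δ ≤ φ y := by
    intro y hy
    rcases eq_or_lt_of_le hy.2 with h | h
    · rw [h]
    · exact mvt_le h
        (fun x hx => hdφ x ⟨lt_of_lt_of_le hy.1 hx.1, hx.2⟩)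
        (fun x hx => hφ'neg x ⟨hy.1.trans hx.1, hx.2.le⟩)
  have hlow : ∀ y ∈ Set.Ioc 0 δ, φ δ - K * Real.log y ≤ y * lam y := by
    intro y hy
    have h := hφlow y hy
    simp only [hφdef] at h ⊢
    linarith
  -- conclude
  have hlog : Tendsto Real.log (𝓝[>] (0:ℝ)) atBot := Real.tendsto_log_nhdsGT_zero
  have hKlog : Tendsto (fun y => (-K) * Real.log y) (𝓝[>] (0:ℝ)) atTop :=
    (tendsto_const_mul_atTop_of_neg (by linarith)).mpr hlog
  have h1 : Tendsto (fun y => φ δ - K * Real.log y) (𝓝[>] (0:ℝ)) atTop := by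
    have := tendsto_atTop_add_const_left (𝓝[>] (0:ℝ)) (φ δ) hKlog
    simpa [sub_eq_add_neg, neg_mul] using this
  apply tendsto_atTop_mono' _ _ h1
  filter_upwards [Ioc_mem_nhdsGT_of_mem (Set.mem_Ico.mpr ⟨le_refl (0:ℝ), hδ⟩)] with y hy
  exact hlow y hy
end

section
/- Let f : ℝ → ℝ be differentiable and suppose there are constants Λ₁ ≤ Λ₂ < 0 with Λ₁ ≤ f′(r) ≤ Λ₂ for all r ∈ ℝ. Then for no y₀ > 0 does there exist a differentiable λ : (0, y₀] → ℝ satisfying y·(1+y²)·λ′(y) = f(λ(y)) − λ(y)·(1+y²) for all y ∈ (0, y₀], with |y·λ(y)| ≤ 1 for all y ∈ (0, y₀] and |λ(y)| → +∞ as y → 0⁺. -/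
open Set Filter Real

/-- From f' ≤ Λ₂ everywhere we get a linear upper bound on increments. -/
lemma key_sub (Λ₂ : ℝ) (f f' : ℝ → ℝ) (hf : ∀ r, HasDerivAt f (f' r) r)
    (hup : ∀ r, f' r ≤ Λ₂) : ∀ a b : ℝ, a ≤ b → f b - f a ≤ Λ₂ * (b - a) := by
  intro a b hab
  have hF : ∀ r, HasDerivAt (fun y => f y - Λ₂ * y) (f' r - Λ₂) r := by
    intro r
    have h2 : HasDerivAt (fun y : ℝ => Λ₂ * y) Λ₂ r := by
      simpa using (hasDerivAt_id r).const_mul Λ₂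
    exact (hf r).sub h2
  have hanti : Antitone (fun y => f y - Λ₂ * y) :=
    antitone_of_hasDerivAt_nonpos hF (fun r => by simpa using sub_nonpos.mpr (hup r))
  have := hanti hab
  simp only at this
  linarith

/-- Main auxiliary lemma: blow-up to +∞ is impossible. -/
lemma aux_blowup (Λ₂ : ℝ) (hΛ2 : Λ₂ < 0) (f f' : ℝ → ℝ)
    (hf : ∀ r, HasDerivAt f (f' r) r) (hup : ∀ r, f' r ≤ Λ₂)
    (y₀ : ℝ) (hy₀ : 0 < y₀) (lam : ℝ → ℝ)
    (hode : ∀ y ∈ Set.Ioc 0 y₀, ∃ d : ℝ, HasDerivAt lam d y ∧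
      y * (1 + y ^ 2) * d = f (lam y) - lam y * (1 + y ^ 2))
    (hbd : ∀ y ∈ Set.Ioc 0 y₀, |y * lam y| ≤ 1)
    (htop : Filter.Tendsto lam (nhdsWithin 0 (Set.Ioi 0)) Filter.atTop) : False := by
  have key := key_sub Λ₂ f f' hf hup
  -- choose R ≥ 0 with f R ≤ -1
  set R : ℝ := max 0 ((f 0 + 1) / (-Λ₂)) with hRdef
  have hR0 : 0 ≤ R := le_max_left _ _
  have hfR : f R ≤ -1 := by
    have h1 : f R - f 0 ≤ Λ₂ * (R - 0) := key 0 R hR0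
    have h2 : (f 0 + 1) / (-Λ₂) ≤ R := le_max_right _ _
    have h3 : Λ₂ * R ≤ Λ₂ * ((f 0 + 1) / (-Λ₂)) := mul_le_mul_of_nonpos_left h2 hΛ2.le
    have h4 : Λ₂ * ((f 0 + 1) / (-Λ₂)) = -(f 0 + 1) := by
      rw [mul_div_assoc', div_eq_iff (neg_ne_zero.mpr hΛ2.ne)]; ring
    rw [h4] at h3
    linarith
  -- find δ with lam > R on (0, δ]
  have hev : ∀ᶠ y in nhdsWithin 0 (Set.Ioi 0), R < lam y :=
    htop.eventually (eventually_gt_atTop R)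
  obtain ⟨ε, hε, hsub⟩ := ((nhdsGT_basis_of_exists_gt ⟨1, one_pos⟩).eventually_iff).mp hev
  set δ : ℝ := min (ε / 2) y₀ with hδdef
  have hδ0 : 0 < δ := lt_min (by linarith) hy₀
  have hδy₀ : δ ≤ y₀ := min_le_right _ _
  have hδε : δ < ε := lt_of_le_of_lt (min_le_left _ _) (by linarith)
  have hsubIoc : Set.Ioc 0 δ ⊆ Set.Ioc 0 y₀ := Set.Ioc_subset_Ioc le_rfl hδy₀
  have hlamR : ∀ y ∈ Set.Ioc 0 δ, R < lam y := by
    intro y hy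
    exact hsub ⟨hy.1, lt_of_le_of_lt hy.2 hδε⟩
  -- derivative of g = y * lam y
  set g : ℝ → ℝ := fun y => y * lam y with hgdef
  have hg' : ∀ y ∈ Set.Ioc 0 y₀, HasDerivAt g (f (lam y) / (1 + y ^ 2)) y := by
    intro y hy
    obtain ⟨d, hd, heq⟩ := hode y hy
    have h1y : (0:ℝ) < 1 + y ^ 2 := by positivity
    have hmul : HasDerivAt g (1 * lam y + y * d) y := (hasDerivAt_id y).mul hd
    have hval : 1 * lam y + y * d = f (lam y) / (1 + y ^ 2) := by
      rw [eq_div_iff h1y.ne']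
      linear_combination heq
    rwa [hval] at hmul
  have hfneg : ∀ y ∈ Set.Ioc 0 δ, f (lam y) ≤ -1 := by
    intro y hy
    have h1 : f (lam y) - f R ≤ Λ₂ * (lam y - R) := key R (lam y) (hlamR y hy).le
    have h2 : Λ₂ * (lam y - R) ≤ 0 :=
      mul_nonpos_of_nonpos_of_nonneg hΛ2.le (by linarith [hlamR y hy])
    linarith
  -- g is antitone on (0, δ]
  have hganti : AntitoneOn g (Set.Ioc 0 δ) := by
    apply antitoneOn_of_hasDerivWithinAt_nonpos (convex_Ioc 0 δ)
      (f' := fun y => f (lam y) / (1 + y ^ 2))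
    · intro y hy
      exact ((hg' y (hsubIoc hy)).continuousAt).continuousWithinAt
    · intro x hx
      rw [interior_Ioc] at hx
      exact ((hg' x (hsubIoc (Set.Ioo_subset_Ioc_self hx))).hasDerivWithinAt)
    · intro x hx
      rw [interior_Ioc] at hx
      have : f (lam x) ≤ -1 := hfneg x (Set.Ioo_subset_Ioc_self hx)
      have h1x : (0:ℝ) < 1 + x ^ 2 := by positivity
      exact div_nonpos_of_nonpos_of_nonneg (by linarith) h1x.le
  set ε₀ : ℝ := δ * lam δ with hε₀def
  have hδmem : δ ∈ Set.Ioc 0 δ := ⟨hδ0, le_rfl⟩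
  have hε₀pos : 0 < ε₀ :=
    mul_pos hδ0 (lt_of_le_of_lt hR0 (hlamR δ hδmem))
  have hglower : ∀ y ∈ Set.Ioc 0 δ, ε₀ ≤ g y := by
    intro y hy
    exact hganti hy hδmem hy.2
  set C : ℝ := |f 0| with hCdef
  have hC0 : 0 ≤ C := abs_nonneg _
  set c : ℝ := Λ₂ * ε₀ / (1 + δ ^ 2) with hcdef
  have h1δ : (0:ℝ) < 1 + δ ^ 2 := by positivity
  have hc : c < 0 := div_neg_of_neg_of_pos (mul_neg_of_neg_of_pos hΛ2 hε₀pos) h1δ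
  set h : ℝ → ℝ := fun y => g y - C * y - c * Real.log y with hhdef
  have hh' : ∀ x ∈ Set.Ioc 0 δ,
      HasDerivAt h (f (lam x) / (1 + x ^ 2) - C - c * x⁻¹) x := by
    intro x hx
    have h1 : HasDerivAt (fun y : ℝ => C * y) C x := by
      simpa using (hasDerivAt_id x).const_mul C
    have h2 : HasDerivAt (fun y : ℝ => c * Real.log y) (c * x⁻¹) x :=
      (Real.hasDerivAt_log hx.1.ne').const_mul c
    exact ((hg' x (hsubIoc hx)).sub h1).sub h2
  -- bound on the derivative of h
  have hbound : ∀ x ∈ Set.Ioo 0 δ, f (lam x) / (1 + x ^ 2) - C - c * x⁻¹ ≤ 0 := by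
    intro x hx
    have hx0 : 0 < x := hx.1
    have hxδ : x ≤ δ := hx.2.le
    have h1x : (0:ℝ) < 1 + x ^ 2 := by positivity
    have hgx : ε₀ ≤ g x := hglower x (Set.Ioo_subset_Ioc_self hx)
    have hl : ε₀ / x ≤ lam x := by
      rw [div_le_iff₀ hx0]
      calc ε₀ ≤ g x := hgx
        _ = lam x * x := by rw [hgdef]; ring
    have hlam0 : 0 ≤ lam x := le_of_lt (lt_of_le_of_lt hR0
      (hlamR x (Set.Ioo_subset_Ioc_self hx)))
    have h1 : f (lam x) - f 0 ≤ Λ₂ * lam x := by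
      have := key 0 (lam x) hlam0
      simpa using this
    have h2 : Λ₂ * lam x ≤ Λ₂ * (ε₀ / x) := mul_le_mul_of_nonpos_left hl hΛ2.le
    have ht1 : (f (lam x) - f 0) / (1 + x ^ 2) ≤ (Λ₂ * ε₀ / x) / (1 + x ^ 2) := by
      apply (div_le_div_iff_of_pos_right h1x).mpr
      calc f (lam x) - f 0 ≤ Λ₂ * (ε₀ / x) := le_trans h1 h2
        _ = Λ₂ * ε₀ / x := by ring
    have hneg : Λ₂ * ε₀ / x ≤ 0 :=
      div_nonpos_of_nonpos_of_nonneg (mul_nonpos_of_nonpos_of_nonneg hΛ2.le hε₀pos.le) hx0.le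
    have ht1b : (Λ₂ * ε₀ / x) / (1 + x ^ 2) ≤ (Λ₂ * ε₀ / x) / (1 + δ ^ 2) := by
      rw [div_le_div_iff₀ h1x h1δ]
      apply mul_le_mul_of_nonpos_left ?_ hneg
      nlinarith
    have ht1c : (Λ₂ * ε₀ / x) / (1 + δ ^ 2) = c * x⁻¹ := by
      rw [hcdef, div_div, ← div_eq_mul_inv, div_div, mul_comm x (1 + δ ^ 2)]
    have ht2 : f 0 / (1 + x ^ 2) ≤ C := by
      calc f 0 / (1 + x ^ 2) ≤ |f 0 / (1 + x ^ 2)| := le_abs_self _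
        _ = |f 0| / (1 + x ^ 2) := by rw [abs_div, abs_of_pos h1x]
        _ ≤ |f 0| := div_le_self (abs_nonneg _) (by nlinarith)
    have hsplit : f (lam x) / (1 + x ^ 2)
        = (f (lam x) - f 0) / (1 + x ^ 2) + f 0 / (1 + x ^ 2) := by ring
    rw [hsplit]
    linarith [ht1, ht1b, ht1c.le, ht1c.ge, ht2]
  have hhanti : AntitoneOn h (Set.Ioc 0 δ) := by
    apply antitoneOn_of_hasDerivWithinAt_nonpos (convex_Ioc 0 δ)
      (f' := fun x => f (lam x) / (1 + x ^ 2) - C - c * x⁻¹)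
    · intro y hy
      exact ((hh' y hy).continuousAt).continuousWithinAt
    · intro x hx
      rw [interior_Ioc] at hx
      exact (hh' x (Set.Ioo_subset_Ioc_self hx)).hasDerivWithinAt
    · intro x hx
      rw [interior_Ioc] at hx
      exact hbound x hx
  set K : ℝ := g δ - C * δ - c * Real.log δ with hKdef
  set y₁ : ℝ := min δ (Real.exp ((2 - K) / c)) with hy₁def
  have hy₁0 : 0 < y₁ := lt_min hδ0 (Real.exp_pos _)
  have hy₁mem : y₁ ∈ Set.Ioc 0 δ := ⟨hy₁0, min_le_left _ _⟩
  have hmono : h δ ≤ h y₁ := hhanti hy₁mem hδmem hy₁mem.2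
  have hlog : Real.log y₁ ≤ (2 - K) / c := by
    calc Real.log y₁ ≤ Real.log (Real.exp ((2 - K) / c)) :=
          Real.log_le_log hy₁0 (min_le_right _ _)
      _ = (2 - K) / c := Real.log_exp _
  have hclog : 2 - K ≤ c * Real.log y₁ := by
    have h5 := mul_le_mul_of_nonpos_left hlog hc.le
    have heq : c * ((2 - K) / c) = 2 - K := by rw [mul_comm, div_mul_cancel₀ _ hc.ne]
    linarith [h5, heq.le, heq.ge]
  have hg2 : 2 ≤ g y₁ := by
    have hhδ : h δ = K := by rw [hhdef, hKdef]
    have hhy₁ : h y₁ = g y₁ - C * y₁ - c * Real.log y₁ := rfl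
    have hCy : 0 ≤ C * y₁ := mul_nonneg hC0 hy₁0.le
    rw [hhδ, hhy₁] at hmono
    linarith
  have hb : |y₁ * lam y₁| ≤ 1 := hbd y₁ (hsubIoc hy₁mem)
  have hle1 : g y₁ ≤ 1 := le_of_abs_le hb
  linarith

/-- analytic core of Theorem 4.1: for a uniformly elliptic f
(Λ₁ ≤ f′ ≤ Λ₂ < 0), no solution of y(1+y²)λ′ = f(λ) − λ(1+y²) on (0,y₀] with
|y·λ(y)| ≤ 1 can satisfy |λ(y)| → +∞ as y → 0⁺. -/
theorem stmt17 (Λ₁ Λ₂ : ℝ) (hΛ : Λ₁ ≤ Λ₂) (hΛ2 : Λ₂ < 0)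
    (f f' : ℝ → ℝ) (hf : ∀ r, HasDerivAt f (f' r) r)
    (hpinch : ∀ r, Λ₁ ≤ f' r ∧ f' r ≤ Λ₂) :
    ¬ ∃ (y₀ : ℝ) (_ : 0 < y₀) (lam : ℝ → ℝ),
      (∀ y ∈ Set.Ioc 0 y₀, ∃ d : ℝ, HasDerivAt lam d y ∧
        y * (1 + y ^ 2) * d = f (lam y) - lam y * (1 + y ^ 2)) ∧
      (∀ y ∈ Set.Ioc 0 y₀, |y * lam y| ≤ 1) ∧
      Filter.Tendsto (fun y => |lam y|) (nhdsWithin 0 (Set.Ioi 0)) Filter.atTop := by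
  rintro ⟨y₀, hy₀, lam, hode, hbd, hblow⟩
  have hup : ∀ r, f' r ≤ Λ₂ := fun r => (hpinch r).2
  -- sign dichotomy near 0
  have h1 : ∀ᶠ y in nhdsWithin 0 (Set.Ioi 0), 1 < |lam y| :=
    hblow.eventually (eventually_gt_atTop 1)
  obtain ⟨ε, hε, hsub⟩ := ((nhdsGT_basis_of_exists_gt ⟨1, one_pos⟩).eventually_iff).mp h1
  set δ : ℝ := min (ε / 2) y₀ with hδdef
  have hδ0 : 0 < δ := lt_min (by linarith) hy₀
  have hδy₀ : δ ≤ y₀ := min_le_right _ _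
  have hδε : δ < ε := lt_of_le_of_lt (min_le_left _ _) (by linarith)
  have habs : ∀ y ∈ Set.Ioc 0 δ, 1 < |lam y| := fun y hy =>
    hsub ⟨hy.1, lt_of_le_of_lt hy.2 hδε⟩
  have hsubIoc : Set.Ioc 0 δ ⊆ Set.Ioc 0 y₀ := Set.Ioc_subset_Ioc le_rfl hδy₀
  have hcont : ContinuousOn lam (Set.Ioc 0 δ) := fun y hy =>
    ((hode y (hsubIoc hy)).choose_spec.1.continuousAt).continuousWithinAt
  have hδmem : δ ∈ Set.Ioc 0 δ := ⟨hδ0, le_rfl⟩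
  have hIooδ : Set.Ioo (0:ℝ) δ ∈ nhdsWithin 0 (Set.Ioi 0) :=
    ((nhdsGT_basis_of_exists_gt ⟨1, one_pos⟩).mem_iff).mpr ⟨δ, hδ0, le_rfl⟩
  have hsign : ∀ y ∈ Set.Ioc 0 δ, 1 < lam y ∨ lam y < -1 := by
    intro y hy
    rcases lt_abs.mp (habs y hy) with hh | hh
    · exact Or.inl hh
    · exact Or.inr (by linarith)
  have hdichot : (∀ y ∈ Set.Ioc 0 δ, 1 < lam y) ∨ (∀ y ∈ Set.Ioc 0 δ, lam y < -1) := by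
    rcases hsign δ hδmem with hδpos | hδneg
    · left
      intro y hy
      rcases hsign y hy with hh | hh
      · exact hh
      · exfalso
        have hyδ : y ≤ δ := hy.2
        have hIcc : Set.Icc y δ ⊆ Set.Ioc 0 δ := fun z hz => ⟨lt_of_lt_of_le hy.1 hz.1, hz.2⟩
        have h0mem : (0:ℝ) ∈ Set.Icc (lam y) (lam δ) := ⟨by linarith, by linarith⟩
        obtain ⟨z, hz, hz0⟩ := intermediate_value_Icc hyδ (hcont.mono hIcc) h0mem
        have := habs z (hIcc hz)
        rw [hz0, abs_zero] at this
        linarith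
    · right
      intro y hy
      rcases hsign y hy with hh | hh
      · exfalso
        have hyδ : y ≤ δ := hy.2
        have hIcc : Set.Icc y δ ⊆ Set.Ioc 0 δ := fun z hz => ⟨lt_of_lt_of_le hy.1 hz.1, hz.2⟩
        have h0mem : (0:ℝ) ∈ Set.Icc (lam δ) (lam y) := ⟨by linarith, by linarith⟩
        obtain ⟨z, hz, hz0⟩ := intermediate_value_Icc' hyδ (hcont.mono hIcc) h0mem
        have := habs z (hIcc hz)
        rw [hz0, abs_zero] at this
        linarith
      · exact hh
  rcases hdichot with hpos | hneg
  · -- lam → +∞ : apply aux_blowup directly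
    have heq : (fun y => |lam y|) =ᶠ[nhdsWithin 0 (Set.Ioi 0)] lam := by
      filter_upwards [hIooδ] with y hy
      exact abs_of_pos (by linarith [hpos y (Set.Ioo_subset_Ioc_self hy)])
    exact aux_blowup Λ₂ hΛ2 f f' hf hup y₀ hy₀ lam hode hbd (Filter.Tendsto.congr' heq hblow)
  · -- lam → -∞ : apply aux_blowup to the reflected problem
    have heq : (fun y => |lam y|) =ᶠ[nhdsWithin 0 (Set.Ioi 0)] (fun y => -lam y) := by
      filter_upwards [hIooδ] with y hy
      exact abs_of_neg (by linarith [hneg y (Set.Ioo_subset_Ioc_self hy)])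
    have htop : Filter.Tendsto (fun y => -lam y) (nhdsWithin 0 (Set.Ioi 0)) Filter.atTop :=
      Filter.Tendsto.congr' heq hblow
    have hfn : ∀ r, HasDerivAt (fun r => -f (-r)) (f' (-r)) r := by
      intro r
      have hneg' : HasDerivAt (fun x : ℝ => -x) (-1) r := by
        exact hasDerivAt_neg r
      have := ((hf (-r)).comp r hneg').neg
      exact this.congr_deriv (by ring)
    apply aux_blowup Λ₂ hΛ2 (fun r => -f (-r)) (fun r => f' (-r)) hfn
      (fun r => (hpinch (-r)).2) y₀ hy₀ (fun y => -lam y) ?_ ?_ htop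
    · intro y hy
      obtain ⟨d, hd, heqd⟩ := hode y hy
      refine ⟨-d, hd.neg, ?_⟩
      show y * (1 + y ^ 2) * (-d) = -f (-(-lam y)) - (-lam y) * (1 + y ^ 2)
      rw [neg_neg]
      linear_combination -heqd
    · intro y hy
      have := hbd y hy
      calc |y * -lam y| = |-(y * lam y)| := by ring_nf
        _ = |y * lam y| := abs_neg _
        _ ≤ 1 := this
end

section
/- Let α > 0 and let f : ℝ → ℝ be continuously differentiable with f′(r) < 0 for all r and f(α) = α. Let y₀ > 0 and let λ : (0, y₀] → ℝ be differentiable with y·(1+y²)·λ′(y) = f(λ(y)) − λ(y)·(1+y²) for all y ∈ (0, y₀]. Then λ(y) has a limit in the extended reals [−∞, +∞] as y → 0⁺. -/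
open Set Filter Topology

/-- A function with negative derivative at each of its zeros on `Icc a b`
cannot vanish at both endpoints. -/
lemma aux_no_two_zeros {φ ψ : ℝ → ℝ} {a b : ℝ} (hab : a < b)
    (hder : ∀ y ∈ Set.Icc a b, HasDerivAt φ (ψ y) y)
    (hsign : ∀ y ∈ Set.Icc a b, φ y = 0 → ψ y < 0)
    (ha : φ a = 0) (hb : φ b = 0) : False := by
  have hcontAt : ∀ y ∈ Set.Icc a b, ContinuousAt φ y :=
    fun y hy => (hder y hy).continuousAt
  have hψa : ψ a < 0 := hsign a ⟨le_refl a, hab.le⟩ ha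
  -- φ < 0 just to the right of a
  have hslope : Filter.Tendsto (slope φ a) (𝓝[≠] a) (𝓝 (ψ a)) :=
    hasDerivAt_iff_tendsto_slope.mp (hder a ⟨le_refl a, hab.le⟩)
  have hsl' : Filter.Tendsto (slope φ a) (𝓝[>] a) (𝓝 (ψ a)) :=
    hslope.mono_left (nhdsWithin_mono _ (fun x hx => ne_of_gt hx))
  have hev : ∀ᶠ y in 𝓝[>] a, slope φ a y < 0 :=
    hsl'.eventually_lt_const hψa
  obtain ⟨u, hu, huo⟩ := (mem_nhdsGT_iff_exists_Ioo_subset).mp hev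
  have hu' : a < u := hu
  have hneg_near : ∀ y ∈ Set.Ioo a u, φ y < 0 := by
    intro y hy
    have h1 : slope φ a y < 0 := huo hy
    have h2 : (0:ℝ) < y - a := sub_pos.mpr hy.1
    rw [slope_def_field, ha, sub_zero] at h1
    have h4 : φ y = (φ y / (y - a)) * (y - a) := (div_mul_cancel₀ _ h2.ne').symm
    rw [h4]
    exact mul_neg_of_neg_of_pos h1 h2
  set c₀ := min u b with hc₀def
  have hac₀ : a < c₀ := lt_min hu' hab
  set S := {y | y ∈ Set.Icc c₀ b ∧ φ y = 0} with hSdef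
  have hbS : b ∈ S := ⟨⟨min_le_right _ _, le_refl b⟩, hb⟩
  have hSsub : S ⊆ Set.Icc a b := fun y hy => ⟨hac₀.le.trans hy.1.1, hy.1.2⟩
  have hSclosed : IsClosed S := by
    apply IsSeqClosed.isClosed
    intro x p hx hxp
    have hpIcc : p ∈ Set.Icc c₀ b :=
      isClosed_Icc.mem_of_tendsto hxp (Filter.Eventually.of_forall fun n => (hx n).1)
    refine ⟨hpIcc, ?_⟩
    have hc : ContinuousAt φ p := hcontAt p ⟨hac₀.le.trans hpIcc.1, hpIcc.2⟩
    have h1 : Filter.Tendsto (fun n => φ (x n)) Filter.atTop (𝓝 (φ p)) :=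
      hc.tendsto.comp hxp
    have h2 : Filter.Tendsto (fun n => φ (x n)) Filter.atTop (𝓝 (0:ℝ)) := by
      simp only [fun n => (hx n).2]; exact tendsto_const_nhds
    exact tendsto_nhds_unique h1 h2
  set c := sInf S with hcdef
  have hcS : c ∈ S := hSclosed.csInf_mem ⟨b, hbS⟩ ⟨c₀, fun y hy => hy.1.1⟩
  have hac : a < c := lt_of_lt_of_le hac₀ hcS.1.1
  have hcIcc : c ∈ Set.Icc a b := hSsub hcS
  have hψc : ψ c < 0 := hsign c hcIcc hcS.2
  -- no zeros of φ in (a, c)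
  have hnozero : ∀ y ∈ Set.Ioo a c, φ y ≠ 0 := by
    intro y hy h0
    have hyb : y ≤ b := hy.2.le.trans hcIcc.2
    rcases lt_or_ge y c₀ with hyc | hyc
    · have hyu : y < u := lt_of_lt_of_le hyc (min_le_left _ _)
      exact absurd h0 (ne_of_lt (hneg_near y ⟨hy.1, hyu⟩))
    · exact absurd (csInf_le ⟨c₀, fun z hz => hz.1.1⟩ (⟨⟨hyc, hyb⟩, h0⟩ : y ∈ S))
        (not_le.mpr hy.2)
  -- φ < 0 on (a, c)
  have hnegc : ∀ y ∈ Set.Ioo a c, φ y < 0 := by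
    intro y hy
    obtain ⟨y₁, hy₁⟩ : (Set.Ioo a (min u c)).Nonempty :=
      Set.nonempty_Ioo.mpr (lt_min hu' hac)
    have hy₁c : y₁ ∈ Set.Ioo a c := ⟨hy₁.1, lt_of_lt_of_le hy₁.2 (min_le_right _ _)⟩
    have hφy₁ : φ y₁ < 0 := hneg_near y₁ ⟨hy₁.1, lt_of_lt_of_le hy₁.2 (min_le_left _ _)⟩
    rcases (hnozero y hy).lt_or_gt with h | h
    · exact h
    · exfalso
      have hsub : Set.uIcc y₁ y ⊆ Set.Ioo a c :=
        (Set.ordConnected_Ioo).uIcc_subset hy₁c hy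
      have hsub2 : Set.Ioo a c ⊆ Set.Icc a b :=
        fun z hz => ⟨hz.1.le, hz.2.le.trans hcIcc.2⟩
      have hcont : ContinuousOn φ (Set.uIcc y₁ y) :=
        fun z hz => (hcontAt z (hsub2 (hsub hz))).continuousWithinAt
      have h0mem : (0:ℝ) ∈ Set.uIcc (φ y₁) (φ y) :=
        Set.mem_uIcc.mpr (Or.inl ⟨hφy₁.le, h.le⟩)
      obtain ⟨x, hx, hφx⟩ := intermediate_value_uIcc hcont h0mem
      exact hnozero x (hsub hx) hφx
  -- slope at c from the left is ≥ 0, contradiction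
  have hslc : Filter.Tendsto (slope φ c) (𝓝[<] c) (𝓝 (ψ c)) :=
    (hasDerivAt_iff_tendsto_slope.mp (hder c hcIcc)).mono_left
      (nhdsWithin_mono _ (fun x hx => ne_of_lt hx))
  have hevc : ∀ᶠ y in 𝓝[<] c, 0 ≤ slope φ c y := by
    filter_upwards [Ioo_mem_nhdsLT hac] with y hy
    have h1 : φ y < 0 := hnegc y hy
    have h2 : y - c < 0 := sub_neg.mpr hy.2
    have h3 : slope φ c y = φ y / (y - c) := by
      rw [slope_def_field, hcS.2, sub_zero]
    rw [h3]
    exact (div_pos_of_neg_of_neg h1 h2).le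
  exact absurd (ge_of_tendsto hslc hevc) (not_le.mpr hψc)

/-- for f C¹ with f′ < 0 and f(α) = α, α > 0, any solution of
y(1+y²)λ′ = f(λ) − λ(1+y²) on (0,y₀] has a limit in [−∞,+∞] as y → 0⁺. -/
theorem stmt18 (α : ℝ) (hα : 0 < α) (f f' : ℝ → ℝ)
    (hf : ∀ r, HasDerivAt f (f' r) r) (hf'c : Continuous f')
    (hneg : ∀ r, f' r < 0) (hfα : f α = α)
    (y₀ : ℝ) (hy₀ : 0 < y₀) (lam lam' : ℝ → ℝ)
    (hd : ∀ y ∈ Set.Ioc 0 y₀, HasDerivAt lam (lam' y) y)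
    (hode : ∀ y ∈ Set.Ioc 0 y₀,
      y * (1 + y ^ 2) * lam' y = f (lam y) - lam y * (1 + y ^ 2)) :
    ∃ L : EReal, Filter.Tendsto (fun y => (lam y : EReal))
      (nhdsWithin 0 (Set.Ioi 0)) (nhds L) := by
  -- f is strictly antitone
  have hanti : StrictAnti f := by
    apply strictAnti_of_deriv_neg
    intro x
    rw [(hf x).deriv]
    exact hneg x
  set φ : ℝ → ℝ := fun y => f (lam y) - lam y * (1 + y ^ 2) with hφdef
  set ψ : ℝ → ℝ := fun y => f' (lam y) * lam' y -
      (lam' y * (1 + y ^ 2) + lam y * (2 * y)) with hψdef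
  have hφd : ∀ y ∈ Set.Ioc 0 y₀, HasDerivAt φ (ψ y) y := by
    intro y hy
    have h1 : HasDerivAt (fun z => f (lam z)) (f' (lam y) * lam' y) y :=
      (hf (lam y)).comp y (hd y hy)
    have h2 : HasDerivAt (fun z : ℝ => 1 + z ^ 2) (2 * y) y := by
      simpa using (hasDerivAt_pow 2 y).const_add 1
    exact h1.sub ((hd y hy).mul h2)
  -- at a zero of φ, lam is positive
  have hpos : ∀ y ∈ Set.Ioc 0 y₀, φ y = 0 → 0 < lam y := by
    intro y hy h0
    by_contra hle
    push_neg at hle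
    have h1 : f (lam y) = lam y * (1 + y ^ 2) := by
      have := sub_eq_zero.mp h0; exact this
    have h2 : α < f (lam y) := by
      calc α = f α := hfα.symm
        _ < f 0 := hanti hα
        _ ≤ f (lam y) := (hanti.antitone hle)
    have h3 : lam y * (1 + y ^ 2) ≤ 0 :=
      mul_nonpos_of_nonpos_of_nonneg hle (by positivity)
    linarith
  -- at a zero of φ, ψ < 0
  have hsign : ∀ y ∈ Set.Ioc 0 y₀, φ y = 0 → ψ y < 0 := by
    intro y hy h0
    have hode' := hode y hy
    have hy2 : (0:ℝ) < y * (1 + y ^ 2) := mul_pos hy.1 (by positivity)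
    have hl0 : lam' y = 0 := by
      have : y * (1 + y ^ 2) * lam' y = 0 := by rw [hode']; exact h0
      exact (mul_eq_zero.mp this).resolve_left hy2.ne'
    have hlp : 0 < lam y := hpos y hy h0
    show f' (lam y) * lam' y - (lam' y * (1 + y ^ 2) + lam y * (2 * y)) < 0
    rw [hl0]
    simp only [mul_zero, zero_mul, zero_add, zero_sub, neg_neg]
    have : 0 < lam y * (2 * y) := mul_pos hlp (by linarith [hy.1])
    linarith
  -- φ has at most one zero: obtain ε with no zeros on (0, ε)
  have key : ∃ ε, 0 < ε ∧ ε ≤ y₀ ∧ ∀ y ∈ Set.Ioo 0 ε, φ y ≠ 0 := by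
    by_cases hz : ∃ z ∈ Set.Ioc 0 y₀, φ z = 0
    · obtain ⟨z, hz1, hz2⟩ := hz
      refine ⟨z, hz1.1, hz1.2, fun w hw h0 => ?_⟩
      have hwz : w < z := hw.2
      have hsub : Set.Icc w z ⊆ Set.Ioc 0 y₀ :=
        fun x hx => ⟨lt_of_lt_of_le hw.1 hx.1, hx.2.trans hz1.2⟩
      exact aux_no_two_zeros hwz (fun x hx => hφd x (hsub hx))
        (fun x hx => hsign x (hsub hx)) h0 hz2
    · push_neg at hz
      exact ⟨y₀, hy₀, le_refl _, fun y hy => hz y ⟨hy.1, hy.2.le⟩⟩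
  obtain ⟨ε, hε0, hεy₀, hnz⟩ := key
  have hIsub : Set.Ioo 0 ε ⊆ Set.Ioc 0 y₀ :=
    fun x hx => ⟨hx.1, hx.2.le.trans hεy₀⟩
  have hcontOn : ContinuousOn lam (Set.Ioo 0 ε) :=
    fun x hx => ((hd x (hIsub hx)).continuousAt).continuousWithinAt
  have hφcontAt : ∀ x ∈ Set.Ioo 0 ε, ContinuousAt φ x :=
    fun x hx => (hφd x (hIsub hx)).continuousAt
  -- sign of lam' matches sign of φ
  have hlam'_sign : ∀ y ∈ Set.Ioo 0 ε, (φ y < 0 → lam' y < 0) ∧ (0 < φ y → 0 < lam' y) := by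
    intro y hy
    have hode' := hode y (hIsub hy)
    have hy2 : (0:ℝ) < y * (1 + y ^ 2) := mul_pos hy.1 (by positivity)
    constructor
    · intro h
      by_contra hge; push_neg at hge
      have : 0 ≤ y * (1 + y ^ 2) * lam' y := mul_nonneg hy2.le hge
      rw [hode'] at this
      exact absurd this (not_le.mpr h)
    · intro h
      by_contra hge; push_neg at hge
      have : y * (1 + y ^ 2) * lam' y ≤ 0 := mul_nonpos_of_nonneg_of_nonpos hy2.le hge
      rw [hode'] at this
      exact absurd this (not_le.mpr h)
  have hm : ε / 2 ∈ Set.Ioo (0:ℝ) ε := ⟨by linarith, by linarith⟩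
  have hderiv_eq : ∀ x ∈ Set.Ioo 0 ε, deriv lam x = lam' x :=
    fun x hx => (hd x (hIsub hx)).deriv
  -- constant sign of φ on Ioo 0 ε
  have hconst : (∀ y ∈ Set.Ioo 0 ε, φ y < 0) ∨ (∀ y ∈ Set.Ioo 0 ε, 0 < φ y) := by
    rcases (hnz _ hm).lt_or_gt with h | h
    · left
      intro y hy
      rcases (hnz y hy).lt_or_gt with h' | h'
      · exact h'
      · exfalso
        have hsub : Set.uIcc (ε/2) y ⊆ Set.Ioo 0 ε :=
          (Set.ordConnected_Ioo).uIcc_subset hm hy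
        have hcont : ContinuousOn φ (Set.uIcc (ε/2) y) :=
          fun z hz => (hφcontAt z (hsub hz)).continuousWithinAt
        obtain ⟨x, hx, hφx⟩ := intermediate_value_uIcc hcont
          (Set.mem_uIcc.mpr (Or.inl ⟨h.le, h'.le⟩))
        exact hnz x (hsub hx) hφx
    · right
      intro y hy
      rcases (hnz y hy).lt_or_gt with h' | h'
      · exfalso
        have hsub : Set.uIcc (ε/2) y ⊆ Set.Ioo 0 ε :=
          (Set.ordConnected_Ioo).uIcc_subset hm hy
        have hcont : ContinuousOn φ (Set.uIcc (ε/2) y) :=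
          fun z hz => (hφcontAt z (hsub hz)).continuousWithinAt
        obtain ⟨x, hx, hφx⟩ := intermediate_value_uIcc hcont
          (Set.mem_uIcc.mpr (Or.inr ⟨h'.le, h.le⟩))
        exact hnz x (hsub hx) hφx
      · exact h'
  have hne : (Set.Ioo (0:ℝ) ε).Nonempty := ⟨ε/2, hm⟩
  rcases hconst with h | h
  · -- lam strictly antitone on Ioo 0 ε
    have hA : StrictAntiOn lam (Set.Ioo 0 ε) := by
      apply strictAntiOn_of_deriv_neg (convex_Ioo 0 ε) hcontOn
      intro x hx
      rw [interior_Ioo] at hx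
      rw [hderiv_eq x hx]
      exact (hlam'_sign x hx).1 (h x hx)
    have hA' : AntitoneOn (fun y => (lam y : EReal)) (Set.Ioo 0 ε) := by
      intro x hx y hy hxy
      rcases hxy.eq_or_lt with rfl | hlt
      · exact le_refl _
      · exact EReal.coe_le_coe_iff.mpr (hA hx hy hlt).le
    exact ⟨_, hA'.tendsto_nhdsWithin_Ioo_right hne (OrderTop.bddAbove _)⟩
  · -- lam strictly monotone on Ioo 0 ε
    have hA : StrictMonoOn lam (Set.Ioo 0 ε) := by
      apply strictMonoOn_of_deriv_pos (convex_Ioo 0 ε) hcontOn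
      intro x hx
      rw [interior_Ioo] at hx
      rw [hderiv_eq x hx]
      exact (hlam'_sign x hx).2 (h x hx)
    have hA' : MonotoneOn (fun y => (lam y : EReal)) (Set.Ioo 0 ε) := by
      intro x hx y hy hxy
      rcases hxy.eq_or_lt with rfl | hlt
      · exact le_refl _
      · exact EReal.coe_le_coe_iff.mpr (hA hx hy hlt).le
    exact ⟨_, hA'.tendsto_nhdsWithin_Ioo_right hne (OrderBot.bddBelow _)⟩
end
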